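/- Transport splitting lemma: if X, Y are G-valued random variables and S is a discrete random variable (all possibly dependent), then D(X,Y) ≤ H(S) + Σ_s P(S=s)·D((X|S=s), (Y|S=s)), where D is the entropy transport distance. -/

import Mathlib

open Real
open scoped BigOperators Pointwise Classical

/-- A finitely supported probability space. -/
structure FinProb (Ω : Type*) [Fintype Ω] where
  p : Ω → ℝ
  nonneg : ∀ ω, 0 ≤ p ω
  sum_one : ∑ ω, p ω = 1

/-- Probability that the random variable `X` takes the value `s`. -/
noncomputable def prob {Ω S : Type*} [Fintype Ω] (μ : FinProb Ω) (X : Ω → S) (s : S) : ℝ :=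
  ∑ ω, if X ω = s then μ.p ω else 0

/-- Shannon entropy of a discrete random variable. -/
noncomputable def entropy {Ω S : Type*} [Fintype Ω] (μ : FinProb Ω) (X : Ω → S) : ℝ :=
  ∑ s ∈ Finset.univ.image X, Real.negMulLog (prob μ X s)

/-- Conditional Shannon entropy `H(X|Y) = H(X,Y) - H(Y)`. -/
noncomputable def condEntropy {Ω S T : Type*} [Fintype Ω] (μ : FinProb Ω)
    (X : Ω → S) (Y : Ω → T) : ℝ :=
  entropy μ (fun ω => (X ω, Y ω)) - entropy μ Y

/-- The essential range of a random variable: values attained with positive probability. -/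
noncomputable def rangeF {Ω S : Type*} [Fintype Ω] (μ : FinProb Ω) (X : Ω → S) : Finset S :=
  (Finset.univ.image X).filter (fun s => prob μ X s ≠ 0)

/-- Two random variables (on possibly different spaces) have the same distribution. -/
def IdentDist {Ω Ω' S : Type*} [Fintype Ω] [Fintype Ω'] (μ : FinProb Ω) (X : Ω → S)
    (μ' : FinProb Ω') (Y : Ω' → S) : Prop :=
  ∀ s, prob μ X s = prob μ' Y s

/-- Independence of two random variables. -/
def IndepRV {Ω S T : Type*} [Fintype Ω] (μ : FinProb Ω) (X : Ω → S) (Y : Ω → T) : Prop :=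
  ∀ s t, prob μ (fun ω => (X ω, Y ω)) (s, t) = prob μ X s * prob μ Y t

/-- Joint independence of a finite family of random variables. -/
def IndepFam {Ω ι : Type*} [Fintype Ω] [Fintype ι] {S : ι → Type*}
    (μ : FinProb Ω) (X : ∀ i, Ω → S i) : Prop :=
  ∀ f : ∀ i, S i, prob μ (fun ω i => X i ω) f = ∏ i, prob μ (X i) (f i)

/-- `X` and `Y` are conditionally independent given `W`. -/
def CondIndepGiven {Ω S T U : Type*} [Fintype Ω] (μ : FinProb Ω)
    (X : Ω → S) (Y : Ω → T) (W : Ω → U) : Prop :=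
  ∀ s t u, prob μ (fun ω => (X ω, Y ω, W ω)) (s, t, u) * prob μ W u
    = prob μ (fun ω => (X ω, W ω)) (s, u) * prob μ (fun ω => (Y ω, W ω)) (t, u)

/-- `Y` is determined by `X` (almost surely). -/
def Determines {Ω S T : Type*} [Fintype Ω] (μ : FinProb Ω) (X : Ω → S) (Y : Ω → T) : Prop :=
  ∃ f : S → T, ∀ ω, μ.p ω ≠ 0 → Y ω = f (X ω)

/-- The entropy transport distance between the distributions of `X` and `Y`:
the infimum of `H(Z)` over random variables `Z` (coupled with a copy `X'` of `X`)
such that `X' + Z` is distributed as `Y`. -/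
noncomputable def transDist {Ω₁ Ω₂ G : Type*} [Fintype Ω₁] [Fintype Ω₂] [AddCommGroup G]
    (μ : FinProb Ω₁) (X : Ω₁ → G) (ν : FinProb Ω₂) (Y : Ω₂ → G) : ℝ :=
  sInf {h : ℝ | ∃ (n : ℕ) (μ' : FinProb (Fin n)) (X' Z : Fin n → G),
    IdentDist μ' X' μ X ∧ IdentDist μ' (fun ω => X' ω + Z ω) ν Y ∧ entropy μ' Z = h}

/-- Conditioning a finitely supported probability space on an event `E`
(returning `μ` unchanged if `E` has zero probability). -/
noncomputable def condFinProb {Ω : Type*} [Fintype Ω] (μ : FinProb Ω) (E : Ω → Prop) :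
    FinProb Ω :=
  if h : 0 < ∑ ω, if E ω then μ.p ω else 0 then
    { p := fun ω => if E ω then μ.p ω / (∑ ω', if E ω' then μ.p ω' else 0) else 0
      nonneg := fun ω => by
        try dsimp only
        split
        · exact div_nonneg (μ.nonneg ω) h.le
        · exact le_refl 0
      sum_one := by
        have h' : ∀ ω, (if E ω then μ.p ω / (∑ ω', if E ω' then μ.p ω' else 0) else 0)
            = (if E ω then μ.p ω else 0) / (∑ ω', if E ω' then μ.p ω' else 0) := by
          intro ω; split <;> simp
        rw [Finset.sum_congr rfl (fun ω _ => h' ω), ← Finset.sum_div, div_self h.ne'] }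
  else μ

/-! The optimal couplings of `(X|S=s)` and `(Y|S=s)` are glued into one coupling of `X` and `Y`
on the mixture space `Σ s, Ωₛ` with weights `P(S=s)`. The law of total probability makes the
glued variables distributed as `X` and `Y`, and the entropy of the glued increment `Z` is at most
`H(Z,S) = H(S) + Σ_s P(S=s) H(Zₛ)`, by subadditivity of `negMulLog`. -/

section Prob

variable {Ω S : Type*} [Fintype Ω] (μ : FinProb Ω)

lemma prob_nonneg (X : Ω → S) (s : S) : 0 ≤ prob μ X s :=
  Finset.sum_nonneg fun ω _ => by split_ifs <;> simp [μ.nonneg ω]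

lemma prob_le_one (X : Ω → S) (s : S) : prob μ X s ≤ 1 :=
  μ.sum_one ▸ Finset.sum_le_sum fun ω _ => by split_ifs <;> simp [μ.nonneg ω]

lemma prob_le_prob_comp {T : Type*} (X : Ω → S) (f : S → T) (s : S) :
    prob μ X s ≤ prob μ (f ∘ X) (f s) :=
  Finset.sum_le_sum fun ω _ => by
    by_cases h : X ω = s
    · simp [h]
    · split_ifs <;> simp [μ.nonneg ω]

lemma prob_eq_zero_of_notMem (X : Ω → S) {s : S} (hs : s ∉ Finset.univ.image X) :
    prob μ X s = 0 :=
  Finset.sum_eq_zero fun ω _ => if_neg fun h : X ω = s =>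
    hs (h ▸ Finset.mem_image_of_mem X (Finset.mem_univ ω))

lemma sum_prob_eq_one (X : Ω → S) {A : Finset S} (hA : Finset.univ.image X ⊆ A) :
    ∑ s ∈ A, prob μ X s = 1 := by
  unfold prob
  rw [Finset.sum_comm, ← μ.sum_one]
  refine Finset.sum_congr rfl fun ω _ => ?_
  rw [Finset.sum_ite_eq A (X ω), if_pos (hA (Finset.mem_image_of_mem X (Finset.mem_univ ω)))]

lemma sum_prob_prod_eq_prob {U : Type*} (W : Ω → S) (V : Ω → U) {A : Finset S}
    (hA : Finset.univ.image W ⊆ A) (u : U) :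
    ∑ s ∈ A, prob μ (fun ω => (W ω, V ω)) (s, u) = prob μ V u := by
  unfold prob
  rw [Finset.sum_comm]
  refine Finset.sum_congr rfl fun ω _ => ?_
  simp_rw [Prod.mk.injEq, ite_and]
  rw [Finset.sum_ite_eq A (W ω), if_pos (hA (Finset.mem_image_of_mem W (Finset.mem_univ ω)))]

lemma entropy_eq_sum (X : Ω → S) {A : Finset S} (hA : Finset.univ.image X ⊆ A) :
    entropy μ X = ∑ s ∈ A, Real.negMulLog (prob μ X s) :=
  Finset.sum_subset hA fun s _ hs => by rw [prob_eq_zero_of_notMem μ X hs, Real.negMulLog_zero]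

lemma entropy_nonneg (X : Ω → S) : 0 ≤ entropy μ X :=
  Finset.sum_nonneg fun s _ => Real.negMulLog_nonneg (prob_nonneg μ X s) (prob_le_one μ X s)

lemma IdentDist.entropy_eq {Ω' : Type*} [Fintype Ω'] {μ : FinProb Ω} {X : Ω → S}
    {μ' : FinProb Ω'} {Y : Ω' → S} (h : IdentDist μ X μ' Y) : entropy μ X = entropy μ' Y := by
  rw [entropy_eq_sum μ X Finset.subset_union_left, entropy_eq_sum μ' Y Finset.subset_union_right]
  exact Finset.sum_congr rfl fun s _ => by rw [h s]

end Prob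

lemma Real.negMulLog_sum_le {ι : Type*} (A : Finset ι) (f : ι → ℝ) (hf : ∀ i ∈ A, 0 ≤ f i) :
    Real.negMulLog (∑ i ∈ A, f i) ≤ ∑ i ∈ A, Real.negMulLog (f i) := by
  rw [Real.negMulLog, neg_mul, Finset.sum_mul, ← Finset.sum_neg_distrib]
  refine Finset.sum_le_sum fun i hi => ?_
  rw [Real.negMulLog, neg_mul, neg_le_neg_iff]
  rcases (hf i hi).eq_or_lt with h0 | h0
  · simp [← h0]
  · exact mul_le_mul_of_nonneg_left (Real.log_le_log h0 (Finset.single_le_sum hf hi)) (hf i hi)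

namespace FinProb

noncomputable def mapEquiv {Ω Ω' : Type*} [Fintype Ω] [Fintype Ω'] (μ : FinProb Ω)
    (e : Ω ≃ Ω') : FinProb Ω' where
  p ω' := μ.p (e.symm ω')
  nonneg _ := μ.nonneg _
  sum_one := (Equiv.sum_comp e.symm μ.p).trans μ.sum_one

lemma prob_mapEquiv {Ω Ω' S : Type*} [Fintype Ω] [Fintype Ω'] (μ : FinProb Ω) (e : Ω ≃ Ω')
    (X : Ω → S) (s : S) : prob (μ.mapEquiv e) (X ∘ e.symm) s = prob μ X s :=
  Equiv.sum_comp e.symm fun ω => if X ω = s then μ.p ω else 0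

/-- The mixture of the spaces `μ i` with weights `w`. -/
noncomputable def sigma {ι : Type*} [Fintype ι] {F : ι → Type*} [∀ i, Fintype (F i)]
    (w : FinProb ι) (μ : ∀ i, FinProb (F i)) : FinProb (Σ i, F i) where
  p x := w.p x.1 * (μ x.1).p x.2
  nonneg x := mul_nonneg (w.nonneg x.1) ((μ x.1).nonneg x.2)
  sum_one := by
    rw [← Finset.univ_sigma_univ, Finset.sum_sigma, ← w.sum_one]
    exact Finset.sum_congr rfl fun i _ => by
      rw [← mul_one (w.p i), ← (μ i).sum_one, Finset.mul_sum]

lemma prob_sigma {ι S : Type*} [Fintype ι] {F : ι → Type*} [∀ i, Fintype (F i)]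
    (w : FinProb ι) (μ : ∀ i, FinProb (F i)) (W : ∀ i, F i → S) (s : S) :
    prob (w.sigma μ) (fun x => W x.1 x.2) s = ∑ i, w.p i * prob (μ i) (W i) s := by
  simp_rw [prob, Finset.mul_sum, mul_ite, mul_zero]
  rw [← Finset.univ_sigma_univ, Finset.sum_sigma]
  rfl

lemma entropy_sigma_le {ι S : Type*} [Fintype ι] {F : ι → Type*} [∀ i, Fintype (F i)]
    (w : FinProb ι) (μ : ∀ i, FinProb (F i)) (Z : ∀ i, F i → S) :
    entropy (w.sigma μ) (fun x => Z x.1 x.2)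
      ≤ ∑ i, Real.negMulLog (w.p i) + ∑ i, w.p i * entropy (μ i) (Z i) := by
  set A := Finset.univ.biUnion fun i => Finset.univ.image (Z i)
  have hZA : ∀ i, Finset.univ.image (Z i) ⊆ A := fun i =>
    Finset.subset_biUnion_of_mem (fun i => Finset.univ.image (Z i)) (Finset.mem_univ i)
  have hA : Finset.univ.image (fun x : Σ i, F i => Z x.1 x.2) ⊆ A := by
    intro _ h
    obtain ⟨⟨i, b⟩, -, rfl⟩ := Finset.mem_image.1 h
    exact hZA i (Finset.mem_image_of_mem _ (Finset.mem_univ b))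
  calc entropy (w.sigma μ) (fun x => Z x.1 x.2)
      = ∑ s ∈ A, Real.negMulLog (∑ i, w.p i * prob (μ i) (Z i) s) := by
        simp_rw [entropy_eq_sum _ _ hA, prob_sigma]
    _ ≤ ∑ s ∈ A, ∑ i, Real.negMulLog (w.p i * prob (μ i) (Z i) s) :=
        Finset.sum_le_sum fun s _ => Real.negMulLog_sum_le _ _ fun i _ =>
          mul_nonneg (w.nonneg i) (prob_nonneg _ _ _)
    _ = ∑ i, ∑ s ∈ A, (prob (μ i) (Z i) s * Real.negMulLog (w.p i)
          + w.p i * Real.negMulLog (prob (μ i) (Z i) s)) := by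
        rw [Finset.sum_comm]
        simp_rw [Real.negMulLog_mul]
    _ = ∑ i, (Real.negMulLog (w.p i) + w.p i * entropy (μ i) (Z i)) := by
        refine Finset.sum_congr rfl fun i _ => ?_
        rw [Finset.sum_add_distrib, ← Finset.sum_mul, ← Finset.mul_sum,
          sum_prob_eq_one _ _ (hZA i), one_mul, ← entropy_eq_sum _ _ (hZA i)]
    _ = _ := Finset.sum_add_distrib

noncomputable def law {Ω T : Type*} [Fintype Ω] (μ : FinProb Ω) (S : Ω → T) :
    FinProb (Finset.univ.image S) where
  p s := prob μ S s
  nonneg s := prob_nonneg μ S s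
  sum_one := by rw [Finset.sum_coe_sort _ (prob μ S), sum_prob_eq_one μ S subset_rfl]

end FinProb

section Conditioning

variable {Ω T U : Type*} [Fintype Ω] (μ : FinProb Ω) (S : Ω → T)

lemma prob_mul_prob_condFinProb (s : T) (V : Ω → U) (u : U) :
    prob μ S s * prob (condFinProb μ (fun ω => S ω = s)) V u
      = prob μ (fun ω => (S ω, V ω)) (s, u) := by
  by_cases hpos : 0 < prob μ S s
  · rw [condFinProb, dif_pos (show 0 < ∑ ω, if S ω = s then μ.p ω else 0 from hpos)]
    unfold prob
    rw [Finset.mul_sum]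
    refine Finset.sum_congr rfl fun ω _ => ?_
    by_cases hS : S ω = s
    · by_cases hV : V ω = u
      · simp only [hS, hV, if_true]
        exact mul_div_cancel₀ _ hpos.ne'
      · simp [hS, hV]
    · simp [hS]
  · have h0 : prob μ S s = 0 := le_antisymm (not_lt.1 hpos) (prob_nonneg μ S s)
    rw [h0, zero_mul]
    exact le_antisymm (prob_nonneg _ _ _)
      ((prob_le_prob_comp μ (fun ω => (S ω, V ω)) Prod.fst (s, u)).trans_eq h0)

/-- Law of total probability: gluing copies of `(V|S=s)` with weights `P(S=s)` gives `V`. -/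
lemma identDist_sigma_condFinProb {F : Finset.univ.image S → Type*} [∀ s, Fintype (F s)]
    (ν : ∀ s, FinProb (F s)) (W : ∀ s, F s → U) (V : Ω → U)
    (h : ∀ s, IdentDist (ν s) (W s) (condFinProb μ (fun ω => S ω = s)) V) :
    IdentDist ((FinProb.law μ S).sigma ν) (fun x => W x.1 x.2) μ V := fun u => by
  rw [FinProb.prob_sigma]
  simp_rw [h _ u]
  change ∑ s : Finset.univ.image S, prob μ S s * _ = _
  rw [Finset.sum_coe_sort _ fun s => prob μ S s * prob (condFinProb μ (fun ω => S ω = s)) V u]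
  simp_rw [prob_mul_prob_condFinProb]
  exact sum_prob_prod_eq_prob μ S V subset_rfl u

end Conditioning

section TransDist

variable {Ω₁ Ω₂ G : Type*} [Fintype Ω₁] [Fintype Ω₂] [AddCommGroup G]
  (μ : FinProb Ω₁) (X : Ω₁ → G) (ν : FinProb Ω₂) (Y : Ω₂ → G)

def couplingEntropies : Set ℝ :=
  {h : ℝ | ∃ (n : ℕ) (μ' : FinProb (Fin n)) (X' Z : Fin n → G),
    IdentDist μ' X' μ X ∧ IdentDist μ' (fun ω => X' ω + Z ω) ν Y ∧ entropy μ' Z = h}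

lemma transDist_eq_sInf : transDist μ X ν Y = sInf (couplingEntropies μ X ν Y) := rfl

lemma entropy_mem_couplingEntropies {Ω' : Type*} [Fintype Ω'] {μ' : FinProb Ω'} {X' Z : Ω' → G}
    (hX : IdentDist μ' X' μ X) (hY : IdentDist μ' (fun ω => X' ω + Z ω) ν Y) :
    entropy μ' Z ∈ couplingEntropies μ X ν Y := by
  let e := Fintype.equivFin Ω'
  refine ⟨_, μ'.mapEquiv e, X' ∘ e.symm, Z ∘ e.symm, fun s => ?_, fun s => ?_, ?_⟩
  · rw [FinProb.prob_mapEquiv]; exact hX s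
  · exact (FinProb.prob_mapEquiv μ' e (fun ω => X' ω + Z ω) s).trans (hY s)
  · exact IdentDist.entropy_eq fun s => FinProb.prob_mapEquiv μ' e Z s

/-- The independent coupling: `X` and `Y` sampled independently, `Z = Y - X`. -/
lemma couplingEntropies_nonempty : (couplingEntropies μ X ν Y).Nonempty := by
  refine ⟨_, entropy_mem_couplingEntropies μ X ν Y (μ' := μ.sigma fun _ => ν)
    (X' := fun x => X x.1) (Z := fun x => Y x.2 - X x.1) (fun s => ?_) (fun s => ?_)⟩
  · rw [FinProb.prob_sigma μ _ (fun i _ => X i)]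
    refine Finset.sum_congr rfl fun ω _ => ?_
    simp only [prob]
    split_ifs <;> simp [ν.sum_one]
  · simp_rw [add_sub_cancel]
    rw [FinProb.prob_sigma μ _ (fun _ => Y), ← Finset.sum_mul, μ.sum_one, one_mul]

lemma transDist_le_entropy {Ω' : Type*} [Fintype Ω'] {μ' : FinProb Ω'} {X' Z : Ω' → G}
    (hX : IdentDist μ' X' μ X) (hY : IdentDist μ' (fun ω => X' ω + Z ω) ν Y) :
    transDist μ X ν Y ≤ entropy μ' Z :=
  transDist_eq_sInf μ X ν Y ▸ csInf_le ⟨0, by rintro _ ⟨n, μ'', X'', Z'', -, -, rfl⟩; exact entropy_nonneg μ'' Z''⟩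
    (entropy_mem_couplingEntropies μ X ν Y hX hY)

lemma exists_entropy_lt_transDist_add {ε : ℝ} (hε : 0 < ε) :
    ∃ (n : ℕ) (μ' : FinProb (Fin n)) (X' Z : Fin n → G),
      IdentDist μ' X' μ X ∧ IdentDist μ' (fun ω => X' ω + Z ω) ν Y ∧
      entropy μ' Z < transDist μ X ν Y + ε := by
  rw [transDist_eq_sInf]
  obtain ⟨_, ⟨n, μ', X', Z, hX, hY, rfl⟩, hlt⟩ :=
    Real.lt_sInf_add_pos (couplingEntropies_nonempty μ X ν Y) hε
  exact ⟨n, μ', X', Z, hX, hY, hlt⟩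

end TransDist

/-- transport splitting lemma: for `G`-valued random variables `X, Y` and a
discrete random variable `S` on the same space,
`D(X,Y) ≤ H(S) + Σ_s P(S=s)·D((X|S=s), (Y|S=s))`. -/
theorem transDist_splitting {G Ω T : Type*} [AddCommGroup G] [Fintype Ω]
    (μ : FinProb Ω) (X Y : Ω → G) (S : Ω → T) :
    transDist μ X μ Y ≤ entropy μ S +
      ∑ s ∈ Finset.univ.image S, prob μ S s *
        transDist (condFinProb μ (fun ω => S ω = s)) X
          (condFinProb μ (fun ω => S ω = s)) Y := by
  set D := fun s => transDist (condFinProb μ (fun ω => S ω = s)) X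
    (condFinProb μ (fun ω => S ω = s)) Y
  refine le_of_forall_pos_le_add fun ε hε => ?_
  choose n μc Xc Zc hX hY hZ using
    fun s : Finset.univ.image S =>
      exists_entropy_lt_transDist_add (condFinProb μ fun ω => S ω = s) X _ Y hε
  have hsum (f : T → ℝ) : ∑ s : Finset.univ.image S, f s = ∑ s ∈ Finset.univ.image S, f s :=
    Finset.sum_coe_sort _ f
  calc transDist μ X μ Y
      ≤ entropy ((FinProb.law μ S).sigma μc) (fun x => Zc x.1 x.2) :=
        transDist_le_entropy μ X μ Y (identDist_sigma_condFinProb μ S μc Xc X hX)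
          (identDist_sigma_condFinProb μ S μc (fun s b => Xc s b + Zc s b) Y hY)
    _ ≤ ∑ s : Finset.univ.image S, Real.negMulLog (prob μ S s)
          + ∑ s : Finset.univ.image S, prob μ S s * entropy (μc s) (Zc s) :=
        FinProb.entropy_sigma_le _ _ _
    _ ≤ entropy μ S + ∑ s : Finset.univ.image S, prob μ S s * (D s + ε) := by
        rw [hsum fun s => Real.negMulLog (prob μ S s)]
        exact add_le_add le_rfl (Finset.sum_le_sum fun s _ =>
          mul_le_mul_of_nonneg_left (hZ s).le (prob_nonneg μ S s))
    _ = entropy μ S + ∑ s ∈ Finset.univ.image S, prob μ S s * D s + ε := by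
        simp_rw [mul_add, Finset.sum_add_distrib, ← Finset.sum_mul]
        rw [hsum fun s => prob μ S s * D s, hsum (prob μ S), sum_prob_eq_one μ S subset_rfl]
        ring
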